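/- For every integer n ≥ 0 there exists an involution Ψ of the set H_n such that: Ψ(μ)=μ if and only if μ∈F_n; for every μ∉F_n, ρ(Ψ(μ)) equals y²·ρ(μ) or y^{−2}·ρ(μ); and for every μ∈H_n, the exponent of t in the monomial ρ(Ψ(μ)) equals the exponent of t in ρ(μ). -/

import Mathlib

/-!
A path of `H_n` fails the conditions of `F_n` exactly at a straight level step weighted `q^c`,
a wavy level step weighted `y²q^c`, or an up step whose matching pair is "mixed", weighted
`(y²q^a, ytq^{h+1+b})` or `(ytq^{h+1+a}, q^b)`. `Ψ` toggles the first such position, exchanging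
`q^c ↔ y²q^c` together with the colour of the level step, resp. the two kinds of mixed pairs.
Toggling changes neither the heights nor the matchings, and it maps violations to violations, so
the first violation of `Ψ μ` is that of `μ` and `Ψ` is an involution fixing exactly `F_n`. On the
exponent vector `∑ (a, b, c)` of `ρ` a toggle adds or removes `(2, 0, 0)`, which gives the
factor `y^{±2}` and the invariance of the `t`-degree.
-/

open Finset

/-- A step of a bicolored Motzkin path: up, down, straight level, wavy level. -/
inductive MStep where
  | U : MStep
  | D : MStep
  | L : MStep
  | W : MStep
deriving DecidableEq

/-- A weighted bicolored Motzkin path of length `n`: a sequence of steps together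
with, for each step, the triple `(a, b, c)` of exponents of its monomial weight
`y^a t^b q^c`. -/
structure WPath (n : ℕ) where
  step : Fin n → MStep
  wt : Fin n → ℕ × ℕ × ℕ

/-- The height increment of a step. -/
def dh : MStep → ℤ
  | MStep.U => 1
  | MStep.D => -1
  | MStep.L => 0
  | MStep.W => 0

/-- The height (of the starting point) of the `j`-th step; `ht μ n` is the final
height. -/
def ht {n : ℕ} (μ : WPath n) (j : ℕ) : ℤ :=
  ∑ k ∈ Finset.range j, if h : k < n then dh (μ.step ⟨k, h⟩) else 0

/-- The underlying path is a Motzkin path: stays weakly above the `x`-axis and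
ends on it. -/
def IsMotzkin {n : ℕ} (μ : WPath n) : Prop :=
  (∀ j ≤ n, 0 ≤ ht μ j) ∧ ht μ n = 0

/-- `y`, as the variable `X 0` of `ℤ[y,t,q]`. -/
noncomputable def yv : MvPolynomial (Fin 3) ℤ := MvPolynomial.X 0

/-- `t`, as the variable `X 1` of `ℤ[y,t,q]`. -/
noncomputable def tv : MvPolynomial (Fin 3) ℤ := MvPolynomial.X 1

/-- `q`, as the variable `X 2` of `ℤ[y,t,q]`. -/
noncomputable def qv : MvPolynomial (Fin 3) ℤ := MvPolynomial.X 2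

/-- The weight `ρ(μ) ∈ ℤ[y,t,q]`: the product of the step weights `y^a t^b q^c`. -/
noncomputable def rho {n : ℕ} (μ : WPath n) : MvPolynomial (Fin 3) ℤ :=
  ∏ j : Fin n, yv ^ (μ.wt j).1 * tv ^ (μ.wt j).2.1 * qv ^ (μ.wt j).2.2

/-- The exponent of `t` in the monomial `ρ(μ)`. -/
def tExp {n : ℕ} (μ : WPath n) : ℕ := ∑ j : Fin n, (μ.wt j).2.1

/-- The weight `w` is `y² q^c` with `lo ≤ c ≤ hi`. -/
def wY2 (w : ℕ × ℕ × ℕ) (lo hi : ℤ) : Prop :=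
  w.1 = 2 ∧ w.2.1 = 0 ∧ lo ≤ (w.2.2 : ℤ) ∧ (w.2.2 : ℤ) ≤ hi

/-- The weight `w` is `y t q^c` with `lo ≤ c ≤ hi`. -/
def wYT (w : ℕ × ℕ × ℕ) (lo hi : ℤ) : Prop :=
  w.1 = 1 ∧ w.2.1 = 1 ∧ lo ≤ (w.2.2 : ℤ) ∧ (w.2.2 : ℤ) ≤ hi

/-- The weight `w` is `q^c` with `lo ≤ c ≤ hi`. -/
def wQ (w : ℕ × ℕ × ℕ) (lo hi : ℤ) : Prop :=
  w.1 = 0 ∧ w.2.1 = 0 ∧ lo ≤ (w.2.2 : ℤ) ∧ (w.2.2 : ℤ) ≤ hi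

/-- `μ ∈ M_n`: no wavy level step on the `x`-axis, and at each step of height
`h`: up and straight level steps carry `y²q^c` (`c ≤ h`) or `ytq^c`
(`h ≤ c ≤ 2h`); wavy level steps (at height `h ≥ 1`) carry `q^c` (`c ≤ h-1`) or
`ytq^c` (`h ≤ c ≤ 2h-1`); down steps at height `h+1` carry `q^c` (`c ≤ h`) or
`ytq^c` (`h+1 ≤ c ≤ 2h+1`). -/
def Mcond {n : ℕ} (μ : WPath n) : Prop :=
  IsMotzkin μ ∧ ∀ j : Fin n,
    (μ.step j = MStep.U →
      wY2 (μ.wt j) 0 (ht μ j) ∨ wYT (μ.wt j) (ht μ j) (2 * ht μ j)) ∧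
    (μ.step j = MStep.L →
      wY2 (μ.wt j) 0 (ht μ j) ∨ wYT (μ.wt j) (ht μ j) (2 * ht μ j)) ∧
    (μ.step j = MStep.W →
      1 ≤ ht μ j ∧
        (wQ (μ.wt j) 0 (ht μ j - 1) ∨ wYT (μ.wt j) (ht μ j) (2 * ht μ j - 1))) ∧
    (μ.step j = MStep.D →
      wQ (μ.wt j) 0 (ht μ j - 1) ∨ wYT (μ.wt j) (ht μ j) (2 * ht μ j - 1))

/-- `μ ∈ H_n`: at each step of height `h`: up steps carry `y²q^c` (`c ≤ h+1`) or
`ytq^c` (`h+1 ≤ c ≤ 2h+2`); straight level steps carry `q^c` (`c ≤ h`) or `ytq^c`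
(`h+1 ≤ c ≤ 2h+1`); wavy level steps carry `y²q^c` (`c ≤ h`) or `ytq^c`
(`h ≤ c ≤ 2h`); down steps at height `h+1` carry `q^c` (`c ≤ h`) or `ytq^c`
(`h+1 ≤ c ≤ 2h+1`). -/
def Hcond {n : ℕ} (μ : WPath n) : Prop :=
  IsMotzkin μ ∧ ∀ j : Fin n,
    (μ.step j = MStep.U →
      wY2 (μ.wt j) 0 (ht μ j + 1) ∨ wYT (μ.wt j) (ht μ j + 1) (2 * ht μ j + 2)) ∧
    (μ.step j = MStep.L →
      wQ (μ.wt j) 0 (ht μ j) ∨ wYT (μ.wt j) (ht μ j + 1) (2 * ht μ j + 1)) ∧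
    (μ.step j = MStep.W →
      wY2 (μ.wt j) 0 (ht μ j) ∨ wYT (μ.wt j) (ht μ j) (2 * ht μ j)) ∧
    (μ.step j = MStep.D →
      wQ (μ.wt j) 0 (ht μ j - 1) ∨ wYT (μ.wt j) (ht μ j) (2 * ht μ j - 1))

/-- The up step `i` and the down step `j` form a matching pair: they face each
other, i.e. the horizontal segment between their midpoints stays under the path. -/
def Matching {n : ℕ} (μ : WPath n) (i j : Fin n) : Prop :=
  (i : ℕ) < (j : ℕ) ∧ μ.step i = MStep.U ∧ μ.step j = MStep.D ∧
    ht μ j = ht μ i + 1 ∧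
    ∀ k : ℕ, (i : ℕ) < k → k < (j : ℕ) → ht μ i + 1 ≤ ht μ k

/-- The defining restrictions of `F_n`: every matching pair at height `h` has
weights `(y²q^a, q^b)` with `a ≤ h+1`, `b ≤ h`, or `(ytq^{h+1+a}, ytq^{h+1+b})`
with `a ≤ h+1`, `b ≤ h`; every straight level step at height `h` has weight
`ytq^c` with `h+1 ≤ c ≤ 2h+1`; every wavy level step at height `h` has weight
`ytq^c` with `h ≤ c ≤ 2h`. -/
def FextraCond {n : ℕ} (μ : WPath n) : Prop :=
  (∀ i j : Fin n, Matching μ i j →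
    (wY2 (μ.wt i) 0 (ht μ i + 1) ∧ wQ (μ.wt j) 0 (ht μ i)) ∨
    (wYT (μ.wt i) (ht μ i + 1) (2 * ht μ i + 2) ∧
      wYT (μ.wt j) (ht μ i + 1) (2 * ht μ i + 1))) ∧
  (∀ j : Fin n, μ.step j = MStep.L →
    wYT (μ.wt j) (ht μ j + 1) (2 * ht μ j + 1)) ∧
  (∀ j : Fin n, μ.step j = MStep.W →
    wYT (μ.wt j) (ht μ j) (2 * ht μ j))

namespace MStep

def swapLevel : MStep → MStep
  | L => W
  | W => L
  | s => s

@[simp] lemma swapLevel_swapLevel (s : MStep) : s.swapLevel.swapLevel = s := by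
  cases s <;> rfl

@[simp] lemma dh_swapLevel (s : MStep) : dh s.swapLevel = dh s := by
  cases s <;> rfl

@[simp] lemma swapLevel_eq_U {s : MStep} : s.swapLevel = U ↔ s = U := by
  cases s <;> decide

@[simp] lemma swapLevel_eq_D {s : MStep} : s.swapLevel = D ↔ s = D := by
  cases s <;> decide

end MStep

section Weights

def Admissible : MStep → ℤ → ℕ × ℕ × ℕ → Prop
  | .U, h, w => wY2 w 0 (h + 1) ∨ wYT w (h + 1) (2 * h + 2)
  | .L, h, w => wQ w 0 h ∨ wYT w (h + 1) (2 * h + 1)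
  | .W, h, w => wY2 w 0 h ∨ wYT w h (2 * h)
  | .D, h, w => wQ w 0 (h - 1) ∨ wYT w h (2 * h - 1)

/-- The weight change made by the involution on a step at height `h`: `y²q^c ↔ ytq^{h+1+c}`
on up steps, `q^c ↔ ytq^{h+c}` on down steps, `q^c ↔ y²q^c` on level steps (which also
change colour). -/
def flipWt : MStep → ℤ → ℕ × ℕ × ℕ → ℕ × ℕ × ℕ
  | .U, h, w => if w.1 = 2 then (1, 1, (h + 1).toNat + w.2.2) else (2, 0, w.2.2 - (h + 1).toNat)
  | .D, h, w => if w.1 = 0 then (1, 1, h.toNat + w.2.2) else (0, 0, w.2.2 - h.toNat)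
  | .L, _, w | .W, _, w => (2 - w.1, w.2)

def Flippable (s : MStep) (w : ℕ × ℕ × ℕ) : Prop :=
  (s = .L → w.1 = 0) ∧ (s = .W → w.1 = 2)

def IsMixedPair (u d : ℕ × ℕ × ℕ) : Prop :=
  (u.1 = 2 ∧ d.1 = 1) ∨ (u.1 = 1 ∧ d.1 = 0)

def DiffersByY2 (a b : ℕ × ℕ × ℕ) : Prop :=
  b = a + (2, 0, 0) ∨ a = b + (2, 0, 0)

variable {s : MStep} {h : ℤ} {w : ℕ × ℕ × ℕ}

lemma flipWt_flipWt (hh : 0 ≤ h) (hw : Admissible s h w) :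
    flipWt s.swapLevel h (flipWt s h w) = w := by
  obtain ⟨a, b, c⟩ := w
  cases s <;> simp only [Admissible, wY2, wYT, wQ] at hw <;>
    rcases hw with ⟨rfl, rfl, h1, h2⟩ | ⟨rfl, rfl, h1, h2⟩ <;>
    simp only [flipWt, MStep.swapLevel, ↓reduceIte, OfNat.one_ne_ofNat, one_ne_zero,
      Prod.mk.injEq, true_and] <;> omega

lemma admissible_flipWt (hh : 0 ≤ h) (hw : Admissible s h w) (hf : Flippable s w) :
    Admissible s.swapLevel h (flipWt s h w) := by
  obtain ⟨a, b, c⟩ := w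
  cases s <;> simp only [Admissible, wY2, wYT, wQ] at hw <;>
    rcases hw with ⟨rfl, rfl, h1, h2⟩ | ⟨rfl, rfl, h1, h2⟩ <;>
    simp [Flippable, flipWt, MStep.swapLevel, Admissible, wY2, wYT, wQ] at hf ⊢ <;> omega

lemma isMixedPair_flipWt {u d : ℕ × ℕ × ℕ} {h' : ℤ} (hud : IsMixedPair u d) :
    IsMixedPair (flipWt .U h u) (flipWt .D h' d) := by
  obtain ⟨a, b, c⟩ := u
  obtain ⟨a', b', c'⟩ := d
  rcases hud with ⟨rfl, rfl⟩ | ⟨rfl, rfl⟩ <;> simp [IsMixedPair, flipWt]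

lemma differsByY2_flipWt_of_level (hw : (s = .L ∧ w.1 = 0) ∨ (s = .W ∧ w.1 = 2)) :
    DiffersByY2 w (flipWt s h w) := by
  obtain ⟨a, b, c⟩ := w
  rcases hw with ⟨rfl, rfl⟩ | ⟨rfl, rfl⟩ <;> simp [flipWt, DiffersByY2]

lemma differsByY2_flipWt_pair {u d : ℕ × ℕ × ℕ} (hh : 0 ≤ h) (hu : Admissible .U h u)
    (hd : Admissible .D (h + 1) d) (hud : IsMixedPair u d) :
    DiffersByY2 (u + d) (flipWt .U h u + flipWt .D (h + 1) d) := by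
  obtain ⟨a, b, c⟩ := u
  obtain ⟨a', b', c'⟩ := d
  rcases hud with ⟨rfl, rfl⟩ | ⟨rfl, rfl⟩ <;>
    simp [Admissible, wY2, wYT, wQ] at hu hd <;> simp [flipWt, DiffersByY2] <;> omega

lemma DiffersByY2.ne {a b : ℕ × ℕ × ℕ} (hab : DiffersByY2 a b) : a ≠ b := by
  rcases hab with rfl | rfl <;> simp [Prod.ext_iff]

lemma DiffersByY2.of_add_eq {a b v w : ℕ × ℕ × ℕ} (hvw : DiffersByY2 v w)
    (h : b + v = a + w) : DiffersByY2 a b := by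
  rcases hvw with rfl | rfl
  · left
    exact add_right_cancel (b := v) (by rw [h]; abel)
  · right
    exact add_right_cancel (b := w) (by rw [← h]; abel)

end Weights

section Paths

variable {n : ℕ}

attribute [ext] WPath

lemma ht_succ (μ : WPath n) (k : Fin n) : ht μ (k + 1) = ht μ k + dh (μ.step k) := by
  simp [ht, Finset.sum_range_succ]

lemma IsMotzkin.ht_nonneg {μ : WPath n} (hμ : IsMotzkin μ) (k : Fin n) : 0 ≤ ht μ k :=
  hμ.1 k k.isLt.le

lemma hcond_iff {μ : WPath n} :
    Hcond μ ↔ IsMotzkin μ ∧ ∀ k, Admissible (μ.step k) (ht μ k) (μ.wt k) := by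
  refine and_congr_right fun _ => forall_congr' fun k => ?_
  cases μ.step k <;> simp [Admissible]

namespace Matching

variable {μ : WPath n} {i j m : Fin n}

lemma ne (h : Matching μ i j) : i ≠ j := Fin.ne_of_lt h.1

lemma right_unique (hi : Matching μ i j) (hm : Matching μ i m) : j = m := by
  wlog hjm : j < m generalizing j m
  · rcases (not_lt.mp hjm).eq_or_lt with h | h
    · exact h.symm
    · exact (this hm hi h).symm
  -- right after the down step `j` the path is back at the height of `i`, below the segment to `m`
  exfalso
  obtain ⟨hij, -, hD, hj, -⟩ := hi
  obtain ⟨-, -, -, hm, hbetween⟩ := hm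
  have hsucc : ht μ (j + 1) = ht μ i := by
    rw [ht_succ, hD, hj, dh]
    ring
  rcases (show (j : ℕ) + 1 ≤ m by omega).eq_or_lt with h | h
  · rw [h] at hsucc
    omega
  · have := hbetween (j + 1) (by omega) h
    omega

lemma left_unique (hi : Matching μ i m) (hj : Matching μ j m) : i = j := by
  wlog hij : i < j generalizing i j
  · rcases (not_lt.mp hij).eq_or_lt with h | h
    · exact h.symm
    · exact (this hj hi h).symm
  exfalso
  linarith [hi.2.2.2.2 j hij hj.1, hi.2.2.2.1, hj.2.2.2.1]

end Matching

def expSum (μ : WPath n) : ℕ × ℕ × ℕ := ∑ k, μ.wt k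

lemma rho_eq_expSum (μ : WPath n) :
    rho μ = yv ^ (expSum μ).1 * tv ^ (expSum μ).2.1 * qv ^ (expSum μ).2.2 := by
  simp only [rho, expSum, Finset.prod_mul_distrib, Finset.prod_pow_eq_pow_sum, Prod.fst_sum,
    Prod.snd_sum]

lemma tExp_eq_expSum (μ : WPath n) : tExp μ = (expSum μ).2.1 := by
  simp only [tExp, expSum, Prod.fst_sum, Prod.snd_sum]

variable {μ ν : WPath n}

lemma rho_of_differsByY2 (h : DiffersByY2 (expSum μ) (expSum ν)) :
    rho ν = yv ^ 2 * rho μ ∨ yv ^ 2 * rho ν = rho μ := by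
  rw [rho_eq_expSum, rho_eq_expSum]
  rcases h with h | h <;> rw [h] <;> [left; right] <;> simp only [Prod.fst_add, Prod.snd_add, pow_add, add_zero] <;> ring

lemma tExp_of_differsByY2 (h : DiffersByY2 (expSum μ) (expSum ν)) : tExp ν = tExp μ := by
  rw [tExp_eq_expSum, tExp_eq_expSum]
  rcases h with h | h <;> simp [h]

def flipAt (μ : WPath n) (S : Finset (Fin n)) : WPath n where
  step k := if k ∈ S then (μ.step k).swapLevel else μ.step k
  wt k := if k ∈ S then flipWt (μ.step k) (ht μ k) (μ.wt k) else μ.wt k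

section FlipAt

variable {S : Finset (Fin n)} {k : Fin n}

lemma step_flipAt_of_mem (hk : k ∈ S) : (flipAt μ S).step k = (μ.step k).swapLevel := if_pos hk

lemma wt_flipAt_of_mem (hk : k ∈ S) :
    (flipAt μ S).wt k = flipWt (μ.step k) (ht μ k) (μ.wt k) := if_pos hk

lemma step_flipAt_of_notMem (hk : k ∉ S) : (flipAt μ S).step k = μ.step k := if_neg hk

lemma wt_flipAt_of_notMem (hk : k ∉ S) : (flipAt μ S).wt k = μ.wt k := if_neg hk

@[simp] lemma ht_flipAt : ht (flipAt μ S) = ht μ := by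
  have hdh (k : Fin n) : dh ((flipAt μ S).step k) = dh (μ.step k) := by
    by_cases hk : k ∈ S
    · rw [step_flipAt_of_mem hk, MStep.dh_swapLevel]
    · rw [step_flipAt_of_notMem hk]
  funext p
  simp only [ht, hdh]

@[simp] lemma matching_flipAt : Matching (flipAt μ S) = Matching μ := by
  have hstep (k : Fin n) (s : MStep) (hs : s = .U ∨ s = .D) :
      (flipAt μ S).step k = s ↔ μ.step k = s := by
    by_cases hk : k ∈ S
    · rcases hs with rfl | rfl <;> simp [step_flipAt_of_mem hk]
    · rw [step_flipAt_of_notMem hk]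
  funext i j
  simp only [Matching, ht_flipAt, hstep _ _ (.inl rfl), hstep _ _ (.inr rfl)]

lemma flipAt_flipAt (hμ : Hcond μ) (S : Finset (Fin n)) : flipAt (flipAt μ S) S = μ := by
  rw [hcond_iff] at hμ
  refine WPath.ext (funext fun k => ?_) (funext fun k => ?_)
  · by_cases hk : k ∈ S
    · rw [step_flipAt_of_mem hk, step_flipAt_of_mem hk, MStep.swapLevel_swapLevel]
    · rw [step_flipAt_of_notMem hk, step_flipAt_of_notMem hk]
  · by_cases hk : k ∈ S
    · rw [wt_flipAt_of_mem hk, step_flipAt_of_mem hk, ht_flipAt, wt_flipAt_of_mem hk,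
        flipWt_flipWt (hμ.1.ht_nonneg k) (hμ.2 k)]
    · rw [wt_flipAt_of_notMem hk, wt_flipAt_of_notMem hk]

lemma hcond_flipAt (hμ : Hcond μ) (hS : ∀ k ∈ S, Flippable (μ.step k) (μ.wt k)) :
    Hcond (flipAt μ S) := by
  rw [hcond_iff] at hμ ⊢
  refine ⟨by simpa only [IsMotzkin, ht_flipAt] using hμ.1, fun k => ?_⟩
  rw [ht_flipAt]
  by_cases hk : k ∈ S
  · rw [step_flipAt_of_mem hk, wt_flipAt_of_mem hk]
    exact admissible_flipWt (hμ.1.ht_nonneg k) (hμ.2 k) (hS k hk)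
  · rw [step_flipAt_of_notMem hk, wt_flipAt_of_notMem hk]
    exact hμ.2 k

lemma expSum_flipAt : expSum (flipAt μ S) + ∑ k ∈ S, μ.wt k =
    expSum μ + ∑ k ∈ S, flipWt (μ.step k) (ht μ k) (μ.wt k) := by
  rw [expSum, expSum, ← Finset.sum_compl_add_sum S, ← Finset.sum_compl_add_sum S μ.wt,
    Finset.sum_congr rfl fun k hk => wt_flipAt_of_notMem (Finset.mem_compl.mp hk),
    Finset.sum_congr rfl fun k hk => wt_flipAt_of_mem hk]
  abel

end FlipAt

def IsViolation (μ : WPath n) (j : Fin n) : Prop :=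
  (μ.step j = .L ∧ (μ.wt j).1 = 0) ∨ (μ.step j = .W ∧ (μ.wt j).1 = 2) ∨
    ∃ m, Matching μ j m ∧ IsMixedPair (μ.wt j) (μ.wt m)

open Classical in
noncomputable def violations (μ : WPath n) : Finset (Fin n) :=
  Finset.univ.filter (IsViolation μ)

open Classical in
noncomputable def toggleSet (μ : WPath n) (j : Fin n) : Finset (Fin n) :=
  Finset.univ.filter fun k => k = j ∨ Matching μ j k

noncomputable def toggle (μ : WPath n) (j : Fin n) : WPath n :=
  flipAt μ (toggleSet μ j)

section Toggle

variable {j k m : Fin n}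

lemma mem_violations : j ∈ violations μ ↔ IsViolation μ j := by
  simp [violations]

lemma mem_toggleSet : k ∈ toggleSet μ j ↔ k = j ∨ Matching μ j k := by
  simp [toggleSet]

lemma IsViolation.step_ne_D (hj : IsViolation μ j) : μ.step j ≠ .D := by
  rcases hj with ⟨h, -⟩ | ⟨h, -⟩ | ⟨m, ⟨-, h, -⟩, -⟩ <;> simp [h]

lemma toggleSet_of_matching (hm : Matching μ j m) : toggleSet μ j = {j, m} := by
  ext k
  rw [mem_toggleSet, Finset.mem_insert, Finset.mem_singleton]
  exact or_congr_right ⟨fun hk => hm.right_unique hk |>.symm, by rintro rfl; exact hm⟩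

lemma toggleSet_of_level (hj : μ.step j = .L ∨ μ.step j = .W) : toggleSet μ j = {j} := by
  ext k
  rw [mem_toggleSet, Finset.mem_singleton, or_iff_left_iff_imp]
  intro hk
  have hU := hk.2.1
  rcases hj with h | h <;> simp [h] at hU

lemma toggleSet_flipAt {S : Finset (Fin n)} : toggleSet (flipAt μ S) j = toggleSet μ j := by
  ext k
  simp only [mem_toggleSet, matching_flipAt]

lemma toggle_toggle (hμ : Hcond μ) (j : Fin n) : toggle (toggle μ j) j = μ := by
  rw [toggle, toggle, toggleSet_flipAt, flipAt_flipAt hμ]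

lemma flippable_of_mem_toggleSet (hj : IsViolation μ j) (hk : k ∈ toggleSet μ j) :
    Flippable (μ.step k) (μ.wt k) := by
  rcases mem_toggleSet.mp hk with rfl | hm
  · rcases hj with ⟨h, h'⟩ | ⟨h, h'⟩ | ⟨m, hm, -⟩
    · simp [Flippable, h, h']
    · simp [Flippable, h, h']
    · simp [Flippable, hm.2.1]
  · simp [Flippable, hm.2.2.1]

lemma hcond_toggle (hμ : Hcond μ) (hj : IsViolation μ j) : Hcond (toggle μ j) :=
  hcond_flipAt hμ fun _ hk => flippable_of_mem_toggleSet hj hk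

lemma differsByY2_expSum_toggle (hμ : Hcond μ) (hj : IsViolation μ j) :
    DiffersByY2 (expSum μ) (expSum (toggle μ j)) := by
  have key : expSum (toggle μ j) + ∑ k ∈ toggleSet μ j, μ.wt k =
      expSum μ + ∑ k ∈ toggleSet μ j, flipWt (μ.step k) (ht μ k) (μ.wt k) :=
    expSum_flipAt
  rcases hj with hlevel | hlevel | ⟨m, hm, hmix⟩
  · rw [toggleSet_of_level (.inl hlevel.1), Finset.sum_singleton, Finset.sum_singleton] at key
    exact (differsByY2_flipWt_of_level (.inl hlevel)).of_add_eq key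
  · rw [toggleSet_of_level (.inr hlevel.1), Finset.sum_singleton, Finset.sum_singleton] at key
    exact (differsByY2_flipWt_of_level (.inr hlevel)).of_add_eq key
  · have hU := hm.2.1
    have hD := hm.2.2.1
    have hht := hm.2.2.2.1
    rw [toggleSet_of_matching hm, Finset.sum_pair hm.ne, Finset.sum_pair hm.ne, hU, hD, hht] at key
    rw [hcond_iff] at hμ
    have hu := hμ.2 j
    have hd := hμ.2 m
    rw [hU] at hu
    rw [hD, hht] at hd
    exact (differsByY2_flipWt_pair (hμ.1.ht_nonneg j) hu hd hmix).of_add_eq key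

lemma isViolation_toggle_self (hj : IsViolation μ j) : IsViolation (toggle μ j) j := by
  have hjS : j ∈ toggleSet μ j := mem_toggleSet.mpr (.inl rfl)
  simp only [IsViolation, toggle, step_flipAt_of_mem hjS, wt_flipAt_of_mem hjS, matching_flipAt]
  rcases hj with ⟨hL, h0⟩ | ⟨hW, h2⟩ | ⟨m, hm, hmix⟩
  · simp [hL, h0, flipWt, MStep.swapLevel]
  · simp [hW, h2, flipWt, MStep.swapLevel]
  · have hmS : m ∈ toggleSet μ j := mem_toggleSet.mpr (.inr hm)
    refine .inr (.inr ⟨m, hm, ?_⟩)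
    rw [wt_flipAt_of_mem hmS, hm.2.1, hm.2.2.1]
    exact isMixedPair_flipWt hmix

lemma isViolation_toggle_iff_of_ne (hj : IsViolation μ j) (hk : k ≠ j) :
    IsViolation (toggle μ j) k ↔ IsViolation μ k := by
  by_cases hkS : k ∈ toggleSet μ j
  · have hD : μ.step k = .D := ((mem_toggleSet.mp hkS).resolve_left hk).2.2.1
    have hD' : (toggle μ j).step k = .D := by
      rw [toggle, step_flipAt_of_mem hkS, hD]
      rfl
    exact iff_of_false (fun h => h.step_ne_D hD') (fun h => h.step_ne_D hD)
  · have hpartner (m : Fin n) (hkm : Matching μ k m) : m ∉ toggleSet μ j := by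
      rw [mem_toggleSet]
      rintro (rfl | hjm)
      · exact hj.step_ne_D hkm.2.2.1
      · exact hk (hkm.left_unique hjm)
    simp only [IsViolation, toggle, matching_flipAt, step_flipAt_of_notMem hkS,
      wt_flipAt_of_notMem hkS]
    refine or_congr_right (or_congr_right (exists_congr fun m => and_congr_right fun hkm => ?_))
    rw [wt_flipAt_of_notMem (hpartner m hkm)]

lemma violations_toggle (hj : IsViolation μ j) : violations (toggle μ j) = violations μ := by
  ext k
  simp only [mem_violations]
  rcases eq_or_ne k j with rfl | hk
  · exact iff_of_true (isViolation_toggle_self hj) hj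
  · exact isViolation_toggle_iff_of_ne hj hk

end Toggle

lemma fextraCond_iff_violations_eq_empty (hμ : Hcond μ) :
    FextraCond μ ↔ violations μ = ∅ := by
  rw [hcond_iff] at hμ
  simp only [Finset.eq_empty_iff_forall_notMem, mem_violations]
  constructor
  · rintro ⟨hpair, hL, hW⟩ j (⟨hLj, h0⟩ | ⟨hWj, h2⟩ | ⟨m, hm, hmix⟩)
    · exact absurd (hL j hLj).1 (by omega)
    · exact absurd (hW j hWj).1 (by omega)
    · rcases hpair j m hm with ⟨⟨hu, -⟩, ⟨hd, -⟩⟩ | ⟨⟨hu, -⟩, ⟨hd, -⟩⟩ <;>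
        simp [IsMixedPair, hu, hd] at hmix
  · intro hno
    refine ⟨fun i m hm => ?_, fun j hLj => ?_, fun j hWj => ?_⟩
    · have hu := hμ.2 i
      have hd := hμ.2 m
      rw [hm.2.1] at hu
      rw [hm.2.2.1, hm.2.2.2.1] at hd
      have hmix : ¬IsMixedPair (μ.wt i) (μ.wt m) := fun h => hno i (.inr (.inr ⟨m, hm, h⟩))
      simp only [Admissible, wY2, wYT, wQ, IsMixedPair] at hu hd hmix ⊢
      omega
    · have hadm := hμ.2 j
      rw [hLj] at hadm
      exact hadm.resolve_left fun h => hno j (.inl ⟨hLj, h.1⟩)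
    · have hadm := hμ.2 j
      rw [hWj] at hadm
      exact hadm.resolve_left fun h => hno j (.inr (.inl ⟨hWj, h.1⟩))

noncomputable def Psi (μ : WPath n) : WPath n :=
  if h : (violations μ).Nonempty then toggle μ ((violations μ).min' h) else μ

lemma Psi_of_nonempty (h : (violations μ).Nonempty) :
    Psi μ = toggle μ ((violations μ).min' h) :=
  dif_pos h

lemma Psi_of_not_nonempty (h : ¬(violations μ).Nonempty) : Psi μ = μ :=
  dif_neg h

lemma hcond_Psi (hμ : Hcond μ) : Hcond (Psi μ) := by
  by_cases h : (violations μ).Nonempty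
  · rw [Psi_of_nonempty h]
    exact hcond_toggle hμ (mem_violations.mp (Finset.min'_mem _ h))
  · rwa [Psi_of_not_nonempty h]

lemma Psi_Psi (hμ : Hcond μ) : Psi (Psi μ) = μ := by
  by_cases h : (violations μ).Nonempty
  · have hV := violations_toggle (mem_violations.mp (Finset.min'_mem _ h))
    have h' : (violations (Psi μ)).Nonempty := by rwa [Psi_of_nonempty h, hV]
    have hmin : (violations (Psi μ)).min' h' = (violations μ).min' h := by
      simp only [Psi_of_nonempty h, hV]
    rw [Psi_of_nonempty h', hmin, Psi_of_nonempty h, toggle_toggle hμ]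
  · rw [Psi_of_not_nonempty h, Psi_of_not_nonempty h]

lemma Psi_eq_self_iff (hμ : Hcond μ) : Psi μ = μ ↔ FextraCond μ := by
  rw [fextraCond_iff_violations_eq_empty hμ, ← Finset.not_nonempty_iff_eq_empty]
  by_cases h : (violations μ).Nonempty
  · refine iff_of_false (fun hfix => ?_) (not_not.mpr h)
    rw [Psi_of_nonempty h] at hfix
    exact (differsByY2_expSum_toggle hμ (mem_violations.mp (Finset.min'_mem _ h))).ne
      (congrArg expSum hfix).symm
  · exact iff_of_true (Psi_of_not_nonempty h) h

lemma differsByY2_expSum_Psi (hμ : Hcond μ) (hF : ¬FextraCond μ) :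
    DiffersByY2 (expSum μ) (expSum (Psi μ)) := by
  rw [fextraCond_iff_violations_eq_empty hμ, ← Finset.not_nonempty_iff_eq_empty,
    not_not] at hF
  rw [Psi_of_nonempty hF]
  exact differsByY2_expSum_toggle hμ (mem_violations.mp (Finset.min'_mem _ hF))

lemma tExp_Psi (hμ : Hcond μ) : tExp (Psi μ) = tExp μ := by
  by_cases hF : FextraCond μ
  · rw [(Psi_eq_self_iff hμ).mpr hF]
  · exact tExp_of_differsByY2 (differsByY2_expSum_Psi hμ hF)

end Paths

/-- Proposition 3.6 (with Lemma 3.7): there is an involution `Ψ` of `H_n` whose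
fixed points are exactly the paths of `F_n`, which changes the weight of a
non-fixed path by a factor `y^2` or `y^{-2}`, and which preserves the exponent of
`t` of the weight. -/
theorem statement14 (n : ℕ) :
    ∃ Ψ : WPath n → WPath n,
      (∀ μ : WPath n, Hcond μ → Hcond (Ψ μ)) ∧
      (∀ μ : WPath n, Hcond μ → Ψ (Ψ μ) = μ) ∧
      (∀ μ : WPath n, Hcond μ → (Ψ μ = μ ↔ FextraCond μ)) ∧
      (∀ μ : WPath n, Hcond μ → ¬ FextraCond μ →
        rho (Ψ μ) = yv ^ 2 * rho μ ∨ yv ^ 2 * rho (Ψ μ) = rho μ) ∧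
      (∀ μ : WPath n, Hcond μ → tExp (Ψ μ) = tExp μ) :=
  ⟨Psi, fun _ => hcond_Psi, fun _ => Psi_Psi, fun _ => Psi_eq_self_iff,
    fun _ hμ hF => rho_of_differsByY2 (differsByY2_expSum_Psi hμ hF), fun _ => tExp_Psi⟩
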